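/- arXiv:2605.06823 — 3 statements merged into one kernel-verified Lean document; each statement's English description precedes it below -/
import Mathlib

section
/- For fixed N ≥ 2, fixed u ∈ (0,1), the Clayton-based maximum CDF value F_β = (N·u^{-β} - N + 1)^{-1/β} is strictly increasing in β > 0, i.e., stronger spatial correlation increases the probability that the effective (maximum) channel gain fails to exceed a threshold. -/
open Real

lemma clayton_key (N : ℕ) (hN : 2 ≤ N) (s : ℝ) (hs : 1 < s) :
    ∀ x : ℝ, 1 < x → (N : ℝ) * x ^ s - N + 1 < ((N : ℝ) * x - N + 1) ^ s := by
  have hN1 : (1 : ℝ) < N := by exact_mod_cast Nat.lt_of_lt_of_le one_lt_two hN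
  set f : ℝ → ℝ := fun y => ((N : ℝ) * y - N + 1) ^ s - N * y ^ s with hf
  have base_pos : ∀ y : ℝ, 1 ≤ y → (0 : ℝ) < (N : ℝ) * y - N + 1 := by
    intro y hy
    nlinarith
  have hmono : StrictMonoOn f (Set.Ici 1) := by
    apply strictMonoOn_of_deriv_pos (convex_Ici 1)
    · apply ContinuousOn.sub
      · apply ContinuousOn.rpow_const
        · fun_prop
        · intro y hy
          exact Or.inl (ne_of_gt (base_pos y hy))
      · apply ContinuousOn.mul continuousOn_const
        apply ContinuousOn.rpow_const continuousOn_id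
        intro y hy
        exact Or.inl (by simp at hy; positivity)
    · intro y hy
      rw [interior_Ici] at hy
      have hy1 : (1 : ℝ) < y := hy
      have hy0 : (0 : ℝ) < y := lt_trans one_pos hy1
      have hb : (0 : ℝ) < (N : ℝ) * y - N + 1 := base_pos y hy1.le
      have hd1 : HasDerivAt (fun z : ℝ => (N : ℝ) * z - N + 1) N y := by
        simpa using (((hasDerivAt_id y).const_mul (N : ℝ)).sub_const (N : ℝ)).add_const 1
      have hd2 : HasDerivAt (fun z : ℝ => ((N : ℝ) * z - N + 1) ^ s)
          ((N : ℝ) * s * ((N : ℝ) * y - N + 1) ^ (s - 1)) y := by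
        simpa [mul_comm, mul_assoc, mul_left_comm] using hd1.rpow_const (Or.inl hb.ne')
      have hd3 : HasDerivAt (fun z : ℝ => (N : ℝ) * z ^ s)
          ((N : ℝ) * (s * y ^ (s - 1))) y := by
        simpa [mul_comm, mul_assoc, mul_left_comm] using
          (Real.hasDerivAt_rpow_const (Or.inl hy0.ne') : HasDerivAt (fun z : ℝ => z ^ s) _ y).const_mul (N : ℝ)
      have hd : HasDerivAt f ((N : ℝ) * s * ((N : ℝ) * y - N + 1) ^ (s - 1)
          - (N : ℝ) * (s * y ^ (s - 1))) y := hd2.sub hd3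
      rw [hd.deriv]
      have hlt : y < (N : ℝ) * y - N + 1 := by nlinarith
      have : y ^ (s - 1) < ((N : ℝ) * y - N + 1) ^ (s - 1) :=
        rpow_lt_rpow hy0.le hlt (by linarith)
      have hNs : (0 : ℝ) < (N : ℝ) * s := by positivity
      have h2 := mul_lt_mul_of_pos_left this hNs
      nlinarith [h2]
  intro x hx
  have h1 : f 1 < f x := hmono (Set.self_mem_Ici) (le_of_lt hx) hx
  have hf1 : f 1 = 1 - N := by
    norm_num [hf]
  have hfx : f x = ((N : ℝ) * x - N + 1) ^ s - N * x ^ s := rfl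
  rw [hf1, hfx] at h1
  linarith

/-- For fixed `N ≥ 2` and `u ∈ (0,1)`, the Clayton maximum-CDF value
`F_β = (N·u^{-β} - N + 1)^{-1/β}` is strictly increasing in `β > 0`. -/
theorem clayton_cdf_strict_mono_in_beta
    (N : ℕ) (hN : 2 ≤ N) (u : ℝ) (hu0 : 0 < u) (hu1 : u < 1) :
    ∀ β₁ β₂ : ℝ, 0 < β₁ → β₁ < β₂ →
      ((N : ℝ) * u ^ (-β₁) - N + 1) ^ (-1 / β₁)
        < ((N : ℝ) * u ^ (-β₂) - N + 1) ^ (-1 / β₂) := by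
  intro β₁ β₂ hβ₁ hlt
  have hβ₂ : 0 < β₂ := lt_trans hβ₁ hlt
  set s := β₂ / β₁ with hsdef
  have hs : 1 < s := (one_lt_div hβ₁).2 hlt
  set x := u ^ (-β₁) with hxdef
  have hx1 : 1 < x := by
    rw [hxdef]
    exact Real.one_lt_rpow_iff_of_pos hu0 |>.2 (Or.inr ⟨hu1, by linarith⟩)
  have hx0 : 0 < x := lt_trans one_pos hx1
  have hN1 : (1 : ℝ) < N := by exact_mod_cast Nat.lt_of_lt_of_le one_lt_two hN
  have hxs : u ^ (-β₂) = x ^ s := by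
    have e1 : -β₁ * s = -β₂ := by
      rw [hsdef]
      field_simp
    rw [hxdef, ← Real.rpow_mul hu0.le, e1]
  have hA1 : 1 < (N : ℝ) * x - N + 1 := by nlinarith
  have hA2 : 0 < (N : ℝ) * x ^ s - N + 1 := by
    have : 1 < x ^ s := Real.one_lt_rpow_iff_of_pos hx0 |>.2 (Or.inl ⟨hx1, by linarith⟩)
    nlinarith
  have hkey : (N : ℝ) * x ^ s - N + 1 < (((N : ℝ) * x - N + 1) ^ s) :=
    clayton_key N hN s hs x hx1
  have heq : ((N : ℝ) * x - N + 1) ^ (-1 / β₁)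
      = (((N : ℝ) * x - N + 1) ^ s) ^ (-1 / β₂) := by
    have e2 : s * (-1 / β₂) = -1 / β₁ := by
      rw [hsdef]
      field_simp
    rw [← Real.rpow_mul (by linarith : (0:ℝ) ≤ (N : ℝ) * x - N + 1), e2]
  rw [hxs, heq]
  exact Real.rpow_lt_rpow_of_neg hA2 hkey (div_neg_of_neg_of_pos (by norm_num) hβ₂)
end

section
/- For any u ∈ (0,1), β > 0, and N ≥ 1, the Clayton maximum-CDF value satisfies the Fréchet bounds: u^N ≤ (N·u^{-β} - N + 1)^{-1/β} ≤ u. That is, the correlated-port CDF lies between the independent-port case u^N and the fully correlated (FPA) case u. -/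
open Real

/-- For any `u ∈ (0,1)`, `β > 0`, and `N ≥ 1`, the Clayton maximum-CDF value satisfies
the Fréchet bounds: `u^N ≤ (N·u^{-β} - N + 1)^{-1/β} ≤ u`. -/
theorem clayton_cdf_frechet_bounds
    (u β : ℝ) (hu0 : 0 < u) (hu1 : u < 1) (hβ : 0 < β) (N : ℕ) (hN : 1 ≤ N) :
    u ^ N ≤ ((N : ℝ) * u ^ (-β) - N + 1) ^ (-1 / β) ∧
      ((N : ℝ) * u ^ (-β) - N + 1) ^ (-1 / β) ≤ u := by
  set t : ℝ := u ^ (-β) with ht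
  have ht1 : 1 < t := by
    rw [ht, one_lt_rpow_iff_of_pos hu0]
    exact Or.inr ⟨hu1, neg_neg_of_pos hβ⟩
  have hN1 : (1 : ℝ) ≤ (N : ℝ) := by exact_mod_cast hN
  have hA : t ≤ (N : ℝ) * t - N + 1 := by nlinarith
  have hApos : 0 < (N : ℝ) * t - N + 1 := lt_of_lt_of_le (by linarith) hA
  have hz : -1 / β ≤ 0 := div_nonpos_of_nonpos_of_nonneg (by norm_num) hβ.le
  constructor
  · -- Bernoulli: N*t - N + 1 ≤ t^N
    have hber : (N : ℝ) * t - N + 1 ≤ t ^ N := by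
      have h := one_add_mul_le_pow (a := t - 1) (by linarith) N
      have he : (1:ℝ) + (t - 1) = t := by ring
      rw [he] at h
      nlinarith
    have h1 : (t ^ N) ^ (-1 / β) ≤ ((N : ℝ) * t - N + 1) ^ (-1 / β) :=
      rpow_le_rpow_of_nonpos hApos hber hz
    have h2 : (t ^ N) ^ (-1 / β) = u ^ N := by
      rw [ht, ← rpow_natCast (u ^ (-β)) N, ← rpow_mul hu0.le, ← rpow_mul hu0.le,
        ← rpow_natCast u N]
      congr 1
      field_simp
    linarith [h1, h2.symm.le, h2.le]
  · have h1 : ((N : ℝ) * t - N + 1) ^ (-1 / β) ≤ t ^ (-1 / β) :=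
      rpow_le_rpow_of_nonpos (by linarith : (0:ℝ) < t) hA hz
    have h2 : t ^ (-1 / β) = u := by
      rw [ht, ← rpow_mul hu0.le]
      have : -β * (-1 / β) = 1 := by field_simp
      rw [this, rpow_one]
    linarith
end

section
/- Under zero-forcing power control p_k = √η · h_k*/|h_k|² with η = d·p_max·min_{k∈S} |h_k|², the power constraint p_k²/d ≤ p_max (interpreting |p_k|²/d ≤ p_max) holds for all k ∈ S, and the aggregation MSE equals (σ²/p_max)·max_{k∈S} 1/|h_k|². -/
open Real Finset

/-! Zero forcing inverts each channel exactly: `p_k h_k = √η`, so every term of the sum in the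
MSE vanishes and only the noise term `dσ²/η` survives. The transmit power is
`|p_k|² = η / |h_k|²`, and the choice `η = d·p_max·min_k |h_k|²` is the largest one for which it
stays below `d·p_max` for every user; it turns `dσ²/η` into `(σ²/p_max) / min_k |h_k|²`. -/

namespace Complex

theorem zeroForcing_mul_cancel (c : ℂ) {h : ℂ} (hh : h ≠ 0) :
    c * starRingEnd ℂ h / (‖h‖ : ℂ) ^ 2 * h = c := by
  have hnorm : (‖h‖ : ℂ) ^ 2 ≠ 0 := by simpa using hh
  rw [div_mul_eq_mul_div, mul_assoc, conj_mul', mul_div_assoc, div_self hnorm, mul_one]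

theorem norm_zeroForcing (c h : ℂ) :
    ‖c * starRingEnd ℂ h / (‖h‖ : ℂ) ^ 2‖ = ‖c‖ / ‖h‖ := by
  rcases eq_or_ne h 0 with rfl | hh
  · simp
  have hpos : 0 < ‖h‖ := norm_pos_iff.mpr hh
  rw [norm_div, norm_mul, norm_conj, norm_pow, norm_real, norm_of_nonneg hpos.le]
  field_simp

end Complex

theorem Finset.sup'_one_div_eq_one_div_inf' {ι α : Type*} [Field α] [LinearOrder α]
    [IsStrictOrderedRing α] {s : Finset ι} (hs : s.Nonempty) {f : ι → α}
    (hf : ∀ i ∈ s, 0 < f i) :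
    s.sup' hs (fun i => 1 / f i) = 1 / s.inf' hs f := by
  obtain ⟨i, hi, hmin⟩ := s.exists_mem_eq_inf' hs f
  refine le_antisymm (sup'_le hs _ fun j hj => ?_) (le_sup'_of_le _ hi (by rw [hmin]))
  rw [hmin]
  exact one_div_le_one_div_of_le (hf i hi) (hmin ▸ inf'_le f hj)

theorem zf_power_constraint_and_mse_general
    {ι : Type*} (S : Finset ι) (hS : S.Nonempty)
    (h : ι → ℂ) (hne : ∀ k ∈ S, h k ≠ 0)
    (pmax d σ2 : ℝ) (hpmax : 0 < pmax) (hd : 0 < d)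
    (η : ℝ) (hη : η = d * pmax * S.inf' hS fun k => ‖h k‖ ^ 2)
    (p : ι → ℂ)
    (hp : ∀ k ∈ S, p k = (Real.sqrt η : ℂ) * (starRingEnd ℂ (h k)) /
        ((‖h k‖ : ℂ) ^ 2))
    (MSE : ℝ)
    (hMSE : MSE = (∑ k ∈ S, ‖1 - p k * h k / (Real.sqrt η : ℂ)‖ ^ 2)
        + d * σ2 / η) :
    (∀ k ∈ S, ‖p k‖ ^ 2 / d ≤ pmax) ∧
      MSE = σ2 / pmax * S.sup' hS fun k => 1 / ‖h k‖ ^ 2 := by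
  have hgain : ∀ k ∈ S, 0 < ‖h k‖ ^ 2 := fun k hk => by
    have := norm_pos_iff.mpr (hne k hk); positivity
  have hmin : 0 < S.inf' hS fun k => ‖h k‖ ^ 2 := (lt_inf'_iff hS).mpr hgain
  have hηpos : 0 < η := by rw [hη]; positivity
  have hsqrt : (Real.sqrt η : ℂ) ≠ 0 := by exact_mod_cast (Real.sqrt_pos.mpr hηpos).ne'
  refine ⟨fun k hk => ?_, ?_⟩
  · have hpower : ‖p k‖ ^ 2 = η / ‖h k‖ ^ 2 := by
      rw [hp k hk, Complex.norm_zeroForcing, Complex.norm_real, norm_of_nonneg (Real.sqrt_nonneg η),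
        div_pow, Real.sq_sqrt hηpos.le]
    calc ‖p k‖ ^ 2 / d = η / ‖h k‖ ^ 2 / d := by rw [hpower]
      _ ≤ η / (S.inf' hS fun k => ‖h k‖ ^ 2) / d := by gcongr; exact inf'_le _ hk
      _ = pmax := by rw [hη]; field_simp
  · have hresidual : ∀ k ∈ S, ‖1 - p k * h k / (Real.sqrt η : ℂ)‖ ^ 2 = 0 := fun k hk => by
      rw [hp k hk, Complex.zeroForcing_mul_cancel _ (hne k hk), div_self hsqrt]
      simp
    rw [hMSE, sum_eq_zero hresidual, zero_add, sup'_one_div_eq_one_div_inf' hS hgain, hη]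
    field_simp

/-- Under zero-forcing power control `p_k = √η·conj(h_k)/|h_k|²` with
`η = d·p_max·min_{k∈S}|h_k|²`, the power constraint `|p_k|²/d ≤ p_max` holds for every
`k ∈ S`, and the aggregation MSE
`∑_{k∈S} |1 - p_k h_k/√η|² + dσ²/η` equals `(σ²/p_max)·max_{k∈S} 1/|h_k|²`. -/
theorem zf_power_constraint_and_mse
    {ι : Type*} (S : Finset ι) (hS : S.Nonempty)
    (h : ι → ℂ) (hne : ∀ k ∈ S, h k ≠ 0)
    (pmax d σ2 : ℝ) (hpmax : 0 < pmax) (hd : 0 < d) (hσ : 0 < σ2)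
    (η : ℝ) (hη : η = d * pmax * S.inf' hS fun k => ‖h k‖ ^ 2)
    (p : ι → ℂ)
    (hp : ∀ k ∈ S, p k = (Real.sqrt η : ℂ) * (starRingEnd ℂ (h k)) /
        ((‖h k‖ : ℂ) ^ 2))
    (MSE : ℝ)
    (hMSE : MSE = (∑ k ∈ S, ‖1 - p k * h k / (Real.sqrt η : ℂ)‖ ^ 2)
        + d * σ2 / η) :
    (∀ k ∈ S, ‖p k‖ ^ 2 / d ≤ pmax) ∧
      MSE = σ2 / pmax * S.sup' hS fun k => 1 / ‖h k‖ ^ 2 :=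
  zf_power_constraint_and_mse_general S hS h hne pmax d σ2 hpmax hd η hη p hp MSE hMSE
end
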